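/- For every cyclic word f : ZMod 4 → Fin 3 containing the color p exactly twice and the colors r and b each exactly once, there exist insertions of one new element of color r and one new element of color b (at arbitrary gaps, not required to be adjacent) extending f to a length-6 cyclic word that satisfies the K3-constraint. The same holds with the K3-constraint replaced by the P3-constraint. -/

import Mathlib

/-!
A length-4 word with one red, one blue and two purples is determined by the positions of its red
and blue letters, so there are twelve cases, each settled by exhibiting the two gaps. The K3-words
of length 6 are the words `xyzxyz`, and `rbpbrp` is a P3-word; when the two purples are adjacent,
the new red and blue go between them, in the cyclic order of the old red and blue for K3 and in
the reverse order for P3.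
-/

namespace SATR

def red : Fin 3 := 0
def blue : Fin 3 := 1
def purple : Fin 3 := 2

/-- `x` lies strictly inside the cyclic arc from `a` to `c` (in the `+1` direction). -/
def arcBetween {n : ℕ} [NeZero n] (a x c : ZMod n) : Prop :=
  0 < (x - a).val ∧ (x - a).val < (c - a).val

/-- Colors `c` and `c'` alternate in the cyclic word `f`: there are two positions of
color `c` such that each of the two open cyclic arcs they determine contains a
position of color `c'`. -/
def Alternates {n : ℕ} [NeZero n] (f : ZMod n → Fin 3) (c c' : Fin 3) : Prop :=
  ∃ i1 i2 j1 j2 : ZMod n, f i1 = c ∧ f i2 = c ∧ i1 ≠ i2 ∧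
    f j1 = c' ∧ f j2 = c' ∧ arcBetween i1 j1 i2 ∧ arcBetween i2 j2 i1

/-- The K3-constraint: all three pairs of distinct colors alternate. -/
def K3Constraint (w : ZMod 6 → Fin 3) : Prop :=
  Alternates w red blue ∧ Alternates w red purple ∧ Alternates w blue purple

/-- The P3-constraint: r–p and b–p alternate, r–b do not. -/
def P3Constraint (w : ZMod 6 → Fin 3) : Prop :=
  Alternates w red purple ∧ Alternates w blue purple ∧ ¬ Alternates w red blue

/-- Number of occurrences of color `c` in the cyclic word `f`. -/
def count {n : ℕ} [NeZero n] (f : ZMod n → Fin 3) (c : Fin 3) : ℕ :=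
  (Finset.univ.filter fun i => f i = c).card

/-- Insert a new element of color `c` into the gap right after position `g`. -/
def insertAt {n : ℕ} [NeZero n] (f : ZMod n → Fin 3) (g : ZMod n) (c : Fin 3) :
    ZMod (n + 1) → Fin 3 :=
  fun j =>
    if j.val = g.val + 1 then c
    else if j.val ≤ g.val then f (j.val : ZMod n)
    else f ((j.val - 1 : ℕ) : ZMod n)

/-- Insert `c1` right after position `g`, and `c2` immediately (cyclically) after `c1`,
so the two new elements are cyclically consecutive. -/
def insertPair {n : ℕ} [NeZero n] (f : ZMod n → Fin 3) (g : ZMod n) (c1 c2 : Fin 3) :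
    ZMod (n + 2) → Fin 3 :=
  insertAt (insertAt f g c1) ((g.val + 1 : ℕ) : ZMod (n + 1)) c2

/-- The cyclic distance between two positions: the minimum of the two arc lengths. -/
def cycDist {n : ℕ} [NeZero n] (i j : ZMod n) : ℕ :=
  min (j - i).val (i - j).val

instance {n : ℕ} [NeZero n] (a x c : ZMod n) : Decidable (arcBetween a x c) :=
  inferInstanceAs (Decidable (_ ∧ _))

instance {n : ℕ} [NeZero n] (f : ZMod n → Fin 3) (c c' : Fin 3) :
    Decidable (Alternates f c c') := by
  unfold Alternates; infer_instance

instance : DecidablePred K3Constraint := fun _ => inferInstanceAs (Decidable (_ ∧ _))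

instance : DecidablePred P3Constraint := fun _ => inferInstanceAs (Decidable (_ ∧ _))

theorem count_eq_one_iff {n : ℕ} [NeZero n] {f : ZMod n → Fin 3} {c : Fin 3} :
    count f c = 1 ↔ ∃ i, ∀ k, f k = c ↔ k = i := by
  simp [count, Finset.card_eq_one, Finset.ext_iff]

theorem eq_purple_of_ne_red_of_ne_blue {c : Fin 3} (hr : c ≠ red) (hb : c ≠ blue) :
    c = purple := by
  revert c; decide

def redBlueWord {n : ℕ} (i j : ZMod n) : ZMod n → Fin 3 :=
  fun k => if k = i then red else if k = j then blue else purple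

theorem exists_eq_redBlueWord {n : ℕ} [NeZero n] {f : ZMod n → Fin 3}
    (hr : count f red = 1) (hb : count f blue = 1) :
    ∃ i j, i ≠ j ∧ f = redBlueWord i j := by
  obtain ⟨i, hi⟩ := count_eq_one_iff.mp hr
  obtain ⟨j, hj⟩ := count_eq_one_iff.mp hb
  refine ⟨i, j, ?_, funext fun k => ?_⟩
  · rintro rfl
    have hrb : red = blue := ((hi i).2 rfl).symm.trans ((hj i).2 rfl)
    exact absurd hrb (by decide)
  · unfold redBlueWord
    split_ifs with hki hkj
    · exact (hi k).2 hki
    · exact (hj k).2 hkj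
    · exact eq_purple_of_ne_red_of_ne_blue ((hi k).not.2 hki) ((hj k).not.2 hkj)

theorem exists_insertAt_K3Constraint (i j : ZMod 4) (hij : i ≠ j) :
    ∃ (g1 : ZMod 4) (g2 : ZMod 5),
      K3Constraint (insertAt (insertAt (redBlueWord i j) g1 red) g2 blue) := by
  fin_cases i <;> fin_cases j <;> try exact absurd rfl hij
  exacts [⟨2, 3, by decide⟩, ⟨1, 0, by decide⟩, ⟨1, 1, by decide⟩, ⟨2, 2, by decide⟩,
    ⟨3, 4, by decide⟩, ⟨2, 1, by decide⟩, ⟨0, 2, by decide⟩, ⟨3, 3, by decide⟩,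
    ⟨0, 1, by decide⟩, ⟨1, 2, by decide⟩, ⟨0, 4, by decide⟩, ⟨0, 0, by decide⟩]

theorem exists_insertAt_P3Constraint (i j : ZMod 4) (hij : i ≠ j) :
    ∃ (g1 : ZMod 4) (g2 : ZMod 5),
      P3Constraint (insertAt (insertAt (redBlueWord i j) g1 red) g2 blue) := by
  fin_cases i <;> fin_cases j <;> try exact absurd rfl hij
  exacts [⟨2, 2, by decide⟩, ⟨2, 0, by decide⟩, ⟨1, 2, by decide⟩, ⟨2, 3, by decide⟩,
    ⟨3, 3, by decide⟩, ⟨3, 1, by decide⟩, ⟨3, 1, by decide⟩, ⟨3, 4, by decide⟩,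
    ⟨0, 0, by decide⟩, ⟨1, 1, by decide⟩, ⟨1, 4, by decide⟩, ⟨0, 1, by decide⟩]

theorem k3_and_p3_minus_r_b_always_satisfiable_general
    (f : ZMod 4 → Fin 3)
    (hr : count f red = 1) (hb : count f blue = 1) :
    (∃ (g1 : ZMod 4) (g2 : ZMod 5),
        K3Constraint (insertAt (insertAt f g1 red) g2 blue)) ∧
    (∃ (g1 : ZMod 4) (g2 : ZMod 5),
        P3Constraint (insertAt (insertAt f g1 red) g2 blue)) := by
  obtain ⟨i, j, hij, rfl⟩ := exists_eq_redBlueWord hr hb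
  exact ⟨exists_insertAt_K3Constraint i j hij, exists_insertAt_P3Constraint i j hij⟩

/-- The K3^{-r,b}- and P3^{-r,b}-constraints are always satisfiable: every length-4
cyclic word with two purples, one red and one blue can be extended by inserting one
new red and one new blue at arbitrary gaps to a length-6 word satisfying the
K3-constraint, and likewise for the P3-constraint. -/
theorem k3_and_p3_minus_r_b_always_satisfiable
    (f : ZMod 4 → Fin 3)
    (hp : count f purple = 2) (hr : count f red = 1) (hb : count f blue = 1) :
    (∃ (g1 : ZMod 4) (g2 : ZMod 5),
        K3Constraint (insertAt (insertAt f g1 red) g2 blue)) ∧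
    (∃ (g1 : ZMod 4) (g2 : ZMod 5),
        P3Constraint (insertAt (insertAt f g1 red) g2 blue)) :=
  k3_and_p3_minus_r_b_always_satisfiable_general f hr hb

end SATR
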